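/- arXiv:1704.02416 — 6 statements merged into one kernel-verified Lean document; each statement's English description precedes it below -/
import Mathlib

section
/- A partition λ is an l-core (for l ≥ 2) if and only if no hook length h^λ_{(a,b)} of any cell (a,b) in the Young diagram of λ is divisible by l. -/
/-- A partition: a weakly decreasing, eventually-zero sequence of naturals
(part `i+1` of the partition is `f i`, i.e. 0-based indexing). -/
def IsPartition (f : ℕ → ℕ) : Prop :=
  (∀ i, f (i + 1) ≤ f i) ∧ ∃ N, ∀ i, N ≤ i → f i = 0

/-- `f` is `l`-restricted: successive differences are `< l`. -/
def Restricted (l : ℕ) (f : ℕ → ℕ) : Prop := ∀ i, f i - f (i + 1) < l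

/-- Transpose (conjugate) partition: `conj f b` is the number of parts `> b`,
i.e. the `(b+1)`-st column length. -/
noncomputable def conj (f : ℕ → ℕ) (b : ℕ) : ℕ := Nat.card {i : ℕ // b < f i}

/-- Hook length of the (0-based) cell `(a, b)` of the diagram of `f`:
`λ_{a+1} + λ'_{b+1} - (a+1) - (b+1) + 1`. -/
noncomputable def hook (f : ℕ → ℕ) (a b : ℕ) : ℕ := f a + conj f b - (a + b + 1)

/-- `f` is an `l`-core: no hook length is divisible by `l`. -/
def IsCore (l : ℕ) (f : ℕ → ℕ) : Prop := ∀ a b, b < f a → ¬ l ∣ hook f a b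

/-- Length (number of nonzero parts) of a partition. -/
noncomputable def plen (f : ℕ → ℕ) : ℕ := Nat.card {i : ℕ // f i ≠ 0}

/-- Steinberg index of `f` relative to `l`: the largest `m` such that the first `m`
successive differences of `f` all equal `l - 1`. -/
noncomputable def stind (l : ℕ) (f : ℕ → ℕ) : ℕ :=
  sSup {m : ℕ | ∀ i < m, f i - f (i + 1) = l - 1}

/-- `g` is obtained from `f` by removing a skew `l`-hook (border strip of size `l`):
the strip occupies consecutive rows `i..j`, with `g k + 1 = f (k+1)` in the middle rows. -/
def HookRemoval (l : ℕ) (f g : ℕ → ℕ) : Prop :=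
  ∃ i j, i ≤ j ∧ (∀ k, k < i → g k = f k) ∧
    (∀ k, i ≤ k → k < j → g k + 1 = f (k + 1)) ∧
    (∀ k, j < k → g k = f k) ∧ f (j + 1) ≤ g j ∧ g j < f j ∧
    f i + (j - i) = g j + l

namespace CoreAux

/-- beta-number of row `a`. -/
def β (f : ℕ → ℕ) (a : ℕ) : ℤ := (f a : ℤ) - a

lemma f_anti {f : ℕ → ℕ} (hf : IsPartition f) : ∀ {i j : ℕ}, i ≤ j → f j ≤ f i := by
  intro i j hij
  induction j with
  | zero => simp_all
  | succ n ih =>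
    rcases Nat.lt_or_ge i (n+1) with h | h
    · exact le_trans (hf.1 n) (ih (Nat.lt_succ_iff.mp h))
    · have : i = n + 1 := le_antisymm hij h
      simp [this]

lemma beta_strictAnti {f : ℕ → ℕ} (hf : IsPartition f) : StrictAnti (β f) := by
  apply strictAnti_nat_of_succ_lt
  intro n
  have := hf.1 n
  unfold β
  push_cast
  omega

lemma beta_anti {f : ℕ → ℕ} (hf : IsPartition f) : ∀ {i j : ℕ}, i ≤ j → β f j ≤ β f i :=
  fun hij => (beta_strictAnti hf).antitone hij

lemma exists_beta_le {f : ℕ → ℕ} (hf : IsPartition f) (x : ℤ) : ∃ i, β f i ≤ x := by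
  obtain ⟨N, hN⟩ := hf.2
  refine ⟨N + x.natAbs, ?_⟩
  have h0 : f (N + x.natAbs) = 0 := hN _ (Nat.le_add_right _ _)
  unfold β
  rw [h0]
  have h2 : -|x| ≤ x := neg_abs_le x
  have h3 : (0:ℤ) ≤ N := Int.natCast_nonneg N
  push_cast
  linarith

/-- the key property of `conj`. -/
lemma conj_spec {f : ℕ → ℕ} (hf : IsPartition f) (b i : ℕ) : b < f i ↔ i < conj f b := by
  obtain ⟨N, hN⟩ := hf.2
  have hex : ∃ i, f i ≤ b := ⟨N, by rw [hN N le_rfl]; omega⟩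
  set m := Nat.find hex with hm
  have hspec : f m ≤ b := Nat.find_spec hex
  have hmin : ∀ k, k < m → b < f k := by
    intro k hk
    have h := Nat.find_min hex (show k < Nat.find hex from hk)
    omega
  have hset : {i : ℕ | b < f i} = Set.Iio m := by
    ext k
    simp only [Set.mem_setOf_eq, Set.mem_Iio]
    constructor
    · intro hk
      by_contra hkm
      push_neg at hkm
      have := f_anti hf hkm
      omega
    · exact hmin k
  have h1 : conj f b = Nat.card (Set.Iio m) := by
    unfold conj
    congr 1
    rw [← hset]
    rfl
  have h2 : Nat.card (Set.Iio m) = m := by simp [Nat.card_eq_card_toFinset]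
  rw [h1, h2]
  constructor
  · intro hk
    have : (i : ℕ) ∈ ({i : ℕ | b < f i}) := hk
    rw [hset] at this
    exact this
  · intro hk
    have : (i : ℕ) ∈ Set.Iio m := hk
    rw [← hset] at this
    exact this

/-- the numbers `b + 1 - conj f b` are never beta-numbers. -/
lemma not_beta {f : ℕ → ℕ} (hf : IsPartition f) (b i : ℕ) :
    β f i ≠ (b + 1 : ℤ) - conj f b := by
  intro h
  unfold β at h
  rcases Nat.lt_or_ge b (f i) with hb | hb
  · have hi : i < conj f b := (conj_spec hf b i).mp hb
    have hbi : (b : ℤ) < f i := by exact_mod_cast hb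
    have hic : (i : ℤ) < conj f b := by exact_mod_cast hi
    omega
  · have hi : ¬ i < conj f b := fun hh => by
      have := (conj_spec hf b i).mpr hh; omega
    push_neg at hi
    have hbi : (f i : ℤ) ≤ b := by exact_mod_cast hb
    have hic : (conj f b : ℤ) ≤ i := by exact_mod_cast hi
    omega

/-- crossing point: for a non-beta value `x` below `β f a`, find the row `j ≥ a` where the
beta sequence crosses `x`. -/
lemma cross {f : ℕ → ℕ} (hf : IsPartition f) {x : ℤ} {a : ℕ}
    (hx : ∀ i, β f i ≠ x) (hxa : x < β f a) :
    ∃ j, a ≤ j ∧ x < β f j ∧ β f (j + 1) < x := by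
  have hex : ∃ i, β f i ≤ x := exists_beta_le hf x
  have hspec : β f (Nat.find hex) ≤ x := Nat.find_spec hex
  have hmin : ∀ k, k < Nat.find hex → x < β f k := by
    intro k hk
    have h := Nat.find_min hex hk
    omega
  have hma : a < Nat.find hex := by
    by_contra h
    push_neg at h
    have := beta_anti hf h
    omega
  refine ⟨Nat.find hex - 1, by omega, hmin _ (by omega), ?_⟩
  have h1 : Nat.find hex - 1 + 1 = Nat.find hex := by omega
  rw [h1]
  have := hx (Nat.find hex)
  omega

/-- any non-beta-number below `β f a` gives a cell in row `a` with the corresponding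
hook length. -/
lemma exists_cell {f : ℕ → ℕ} (hf : IsPartition f) {x : ℤ} {a : ℕ}
    (hx : ∀ i, β f i ≠ x) (hxa : x < β f a) :
    ∃ b, b < f a ∧ (hook f a b : ℤ) = β f a - x := by
  obtain ⟨j, hja, hβj, hβj1⟩ := cross hf hx hxa
  have hbnn : 0 ≤ x + j := by
    unfold β at hβj1
    push_cast at hβj1
    omega
  set b := (x + j).toNat with hb
  have hbz : (b : ℤ) = x + j := Int.toNat_of_nonneg hbnn
  have hbfj : b < f j := by
    unfold β at hβj
    have : (b : ℤ) < f j := by omega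
    exact_mod_cast this
  have hbfa : b < f a := lt_of_lt_of_le hbfj (f_anti hf hja)
  have hconj : conj f b = j + 1 := by
    have h1 : ∀ i : ℕ, b < f i ↔ i < j + 1 := by
      intro i
      constructor
      · intro hi
        by_contra hij
        push_neg at hij
        have h2 : f i ≤ f (j+1) := f_anti hf hij
        have h3 : (f (j+1) : ℤ) - ((j+1 : ℕ) : ℤ) < x := hβj1
        have h4 : (f i : ℤ) ≤ f (j+1) := by exact_mod_cast h2
        have h5 : (b : ℤ) < f i := by exact_mod_cast hi
        push_cast at h3
        omega
      · intro hi
        have h2 : f j ≤ f i := f_anti hf (by omega)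
        omega
    have h2 := conj_spec hf b (j+1)
    have h3 := conj_spec hf b (conj f b)
    have h4 := h1 (j+1)
    have h5 := h1 (conj f b)
    omega
  refine ⟨b, hbfa, ?_⟩
  unfold hook
  rw [hconj]
  unfold β at hxa ⊢
  have hge : a + b + 1 ≤ f a + (j + 1) := by
    have : (a : ℤ) + b + 1 ≤ (f a : ℤ) + (j+1) := by omega
    exact_mod_cast this
  have hcast : ((f a + (j + 1) - (a + b + 1) : ℕ) : ℤ)
      = (f a : ℤ) + ((j:ℤ)+1) - ((a:ℤ) + b + 1) := by
    push_cast [hge]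
    omega
  rw [hcast]
  omega

/-- hook length as an integer, for a genuine cell. -/
lemma hook_eq {f : ℕ → ℕ} (hf : IsPartition f) {a b : ℕ} (hb : b < f a) :
    (hook f a b : ℤ) = β f a - ((b + 1 : ℤ) - conj f b) := by
  have hac : a < conj f b := (conj_spec hf b a).mp hb
  unfold hook β
  have hge : a + b + 1 ≤ f a + conj f b := by omega
  push_cast [hge]
  ring

/-- descending a congruence-class ladder to find a beta-number whose shift by `l`
is not a beta-number. -/
lemma descend {f : ℕ → ℕ} (hf : IsPartition f) {l : ℕ} (hl : 0 < l) :
    ∀ k : ℕ, ∀ a : ℕ, ∀ x : ℤ, (∀ i, β f i ≠ x) → β f a - x = (k + 1) * l →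
      ∃ a', ∀ i, β f i ≠ β f a' - l := by
  intro k
  induction k with
  | zero =>
    intro a x hx hax
    refine ⟨a, fun i hi => ?_⟩
    exact hx i (by omega)
  | succ n ih =>
    intro a x hx hax
    by_cases h : ∀ i, β f i ≠ β f a - l
    · exact ⟨a, h⟩
    · push_neg at h
      obtain ⟨i0, hi0⟩ := h
      refine ih i0 x hx ?_
      rw [hi0]
      push_cast at hax ⊢
      linear_combination hax

/-- from a gap at distance `l` below a beta-number, construct a hook removal. -/
lemma construct {f : ℕ → ℕ} (hf : IsPartition f) {l : ℕ} (hl : 0 < l) {a : ℕ}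
    (hgap : ∀ i, β f i ≠ β f a - l) :
    ∃ g, IsPartition g ∧ HookRemoval l f g := by
  set x := β f a - l with hxdef
  have hxa : x < β f a := by omega
  obtain ⟨j, hja, hβj, hβj1⟩ := cross hf hgap hxa
  have hbnn : 0 ≤ x + j := by
    unfold β at hβj1; push_cast at hβj1; omega
  set gj := (x + j).toNat with hgj
  have hgjz : (gj : ℤ) = x + j := Int.toNat_of_nonneg hbnn
  set g : ℕ → ℕ := fun k => if k < a then f k else if k < j then f (k+1) - 1 else
    if k = j then gj else f k with hgdef
  have hgjval : g j = gj := by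
    simp only [hgdef]
    rw [if_neg (by omega), if_neg (by omega)]
    simp
  have hfj_pos : 1 ≤ f j := by
    unfold β at hβj
    have : (0:ℤ) < f j := by omega
    exact_mod_cast this
  have hmid : ∀ k, a ≤ k → k < j → g k + 1 = f (k+1) := by
    intro k hk1 hk2
    have h1 : f j ≤ f (k+1) := f_anti hf (by omega)
    simp only [hgdef]
    rw [if_neg (by omega), if_pos hk2]
    omega
  have hgjlt : gj < f j := by
    unfold β at hβj
    have : (gj : ℤ) < f j := by omega
    exact_mod_cast this
  have hgjge : f (j+1) ≤ gj := by
    unfold β at hβj1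
    have : (f (j+1) : ℤ) ≤ gj := by omega
    exact_mod_cast this
  have hsum : f a + (j - a) = g j + l := by
    rw [hgjval]
    have hβa : β f a = (f a : ℤ) - a := rfl
    have hz : (f a : ℤ) + ((j:ℤ) - a) = (gj : ℤ) + l := by
      rw [hgjz, hxdef, hβa]; ring
    omega
  refine ⟨g, ⟨?_, ?_⟩, a, j, hja, ?_, hmid, ?_, ?_, ?_, hsum⟩
  · -- monotone
    intro k
    rcases lt_trichotomy (k+1) a with h1 | h1 | h1
    · simp only [hgdef]; rw [if_pos h1, if_pos (by omega)]; exact hf.1 k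
    · have hk : k < a := by omega
      simp only [hgdef]
      rw [if_pos hk, if_neg (by omega)]
      by_cases h2 : k + 1 < j
      · rw [if_pos h2]
        have := hf.1 (k+1)
        have := hf.1 k
        omega
      · rw [if_neg h2]
        by_cases h3 : k + 1 = j
        · rw [if_pos h3]
          have : f j ≤ f k := f_anti hf (by omega)
          omega
        · rw [if_neg h3]; exact hf.1 k
    · have hak : a ≤ k := by omega
      by_cases h2 : k + 1 < j
      · have e1 := hmid k hak (by omega)
        have e2 := hmid (k+1) (by omega) h2
        have := hf.1 (k+1)
        omega
      · by_cases h3 : k + 1 = j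
        · have e1 := hmid k hak (by omega)
          have e2 : g (k+1) = gj := by rw [h3, hgjval]
          rw [e2]
          rw [← h3] at hgjlt
          omega
        · by_cases h4 : k = j
          · have e2 : g (k+1) = f (k+1) := by
              simp only [hgdef]; rw [if_neg (by omega), if_neg (by omega), if_neg (by omega)]
            rw [e2, h4, hgjval]
            exact hgjge
          · have hjk : j < k := by omega
            have e1 : g k = f k := by
              simp only [hgdef]; rw [if_neg (by omega), if_neg (by omega), if_neg h4]
            have e2 : g (k+1) = f (k+1) := by
              simp only [hgdef]; rw [if_neg (by omega), if_neg (by omega), if_neg (by omega)]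
            rw [e1, e2]; exact hf.1 k
  · -- eventually zero
    obtain ⟨N, hN⟩ := hf.2
    refine ⟨N + j + 1, fun i hi => ?_⟩
    simp only [hgdef]
    rw [if_neg (by omega), if_neg (by omega), if_neg (by omega)]
    exact hN i (by omega)
  · intro k hk
    simp only [hgdef]; rw [if_pos hk]
  · intro k hk
    simp only [hgdef]; rw [if_neg (by omega), if_neg (by omega), if_neg (by omega)]
  · rw [hgjval]; exact hgjge
  · rw [hgjval]; exact hgjlt

end CoreAux

open CoreAux

/-- a partition is an `l`-core (no removable skew `l`-hook) iff
no hook length is divisible by `l`. -/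
theorem partition_is_core_iff_no_hook_divisible (l : ℕ) (hl : 2 ≤ l)
    (f : ℕ → ℕ) (hf : IsPartition f) :
    (¬ ∃ g, IsPartition g ∧ HookRemoval l f g) ↔
      ∀ a b, b < f a → ¬ l ∣ hook f a b := by
  have hl0 : 0 < l := by omega
  constructor
  · intro hnr a b hb hdvd
    apply hnr
    have hac : a < conj f b := (conj_spec hf b a).mp hb
    have hhpos : 0 < hook f a b := by
      unfold hook; omega
    set x : ℤ := (b + 1 : ℤ) - conj f b with hxdef
    have hhook := hook_eq hf hb
    have hx : ∀ i, β f i ≠ x := not_beta hf b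
    obtain ⟨c, hc⟩ := hdvd
    have hc1 : 1 ≤ c := by
      rcases Nat.eq_zero_or_pos c with h | h
      · subst h; simp at hc; omega
      · exact h
    have hax : β f a - x = ((c - 1 : ℕ) + 1) * l := by
      rw [← hhook, hc, Nat.cast_mul, Nat.cast_sub hc1]
      push_cast
      ring
    obtain ⟨a', ha'⟩ := descend hf hl0 (c-1) a x hx hax
    exact construct hf hl0 ha'
  · rintro hnh ⟨g, hg, i, j, hij, hlt, hmid, hgt, h1, h2, h3⟩
    have hgjz : (g j : ℤ) = β f i - l + j := by
      have hβ : β f i = (f i : ℤ) - i := rfl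
      have hd : ((j - i : ℕ) : ℤ) = (j : ℤ) - i := by push_cast [hij]; ring
      have hz : (f i : ℤ) + ((j:ℤ) - i) = (g j : ℤ) + l := by
        have := congrArg (fun n : ℕ => (n : ℤ)) h3
        push_cast at this
        omega
      omega
    have hb1 : β f (j+1) < β f i - l := by
      have hβ : β f (j+1) = (f (j+1) : ℤ) - ((j:ℤ)+1) := by unfold β; push_cast; ring
      have : (f (j+1) : ℤ) ≤ g j := by exact_mod_cast h1
      omega
    have hb2 : β f i - l < β f j := by
      have hβ : β f j = (f j : ℤ) - j := rfl
      have : (g j : ℤ) < f j := by exact_mod_cast h2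
      omega
    have hgap : ∀ k, β f k ≠ β f i - l := by
      intro k
      rcases Nat.lt_or_ge j k with h | h
      · have : β f k ≤ β f (j+1) := beta_anti hf (by omega)
        omega
      · have : β f j ≤ β f k := beta_anti hf h
        omega
    have hxa : β f i - l < β f i := by
      have : (0:ℤ) < l := by exact_mod_cast hl0
      omega
    obtain ⟨b, hbf, hhook⟩ := exists_cell hf hgap hxa
    apply hnh i b hbf
    have h4 : (hook f i b : ℤ) = l := by rw [hhook]; ring
    have h5 : hook f i b = l := by exact_mod_cast h4
    rw [h5]
end

section
/- Every partition λ has a unique base-p expansion λ = Σ_{i≥0} p^i λ^i where each λ^i is a p-restricted partition and all but finitely many λ^i are zero. -/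
/-!
A partition is determined by its gaps `λ_j - λ_{j+1}`, and it is `p`-restricted exactly when all
its gaps are `< p`. Taking gaps commutes with `Σ p^i λ^i`, so a base-`p` expansion of `λ` is the
same as a base-`p` expansion of every gap of `λ`: the partition `λ^i` is forced to be the one whose
`j`-th gap is the `i`-th base-`p` digit of `λ_j - λ_{j+1}`.
-/

open Finset

section Digits

lemma sum_range_succ_pow_mul {R : Type*} [CommSemiring R] (x : R) (a : ℕ → R) (N : ℕ) :
    ∑ k ∈ range (N + 1), x ^ k * a k = x * ∑ k ∈ range N, x ^ k * a (k + 1) + a 0 := by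
  rw [sum_range_succ', mul_sum]
  simp [pow_succ', mul_assoc]

def digit (p i n : ℕ) : ℕ := n / p ^ i % p

variable {p : ℕ}

lemma digit_lt (hp : 0 < p) (i n : ℕ) : digit p i n < p := Nat.mod_lt _ hp

lemma digit_eq_zero_of_lt_pow {i n : ℕ} (h : n < p ^ i) : digit p i n = 0 := by
  simp [digit, Nat.div_eq_of_lt h]

lemma sum_range_pow_mul_digit {n N : ℕ} (hn : n < p ^ N) :
    ∑ i ∈ range N, p ^ i * digit p i n = n := by
  induction N generalizing n with
  | zero => simp_all
  | succ N ih =>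
    have hdiv : n / p < p ^ N := Nat.div_lt_of_lt_mul (by rwa [← pow_succ'])
    have hshift (k : ℕ) : digit p (k + 1) n = digit p k (n / p) := by
      simp only [digit, pow_succ', Nat.div_div_eq_div_mul]
    rw [sum_range_succ_pow_mul]
    simp only [hshift, ih hdiv]
    simp [digit, Nat.div_add_mod]

lemma digit_sum_range_pow_mul {a : ℕ → ℕ} (ha : ∀ k, a k < p) {i N : ℕ} (hi : i < N) :
    digit p i (∑ k ∈ range N, p ^ k * a k) = a i := by
  induction i generalizing a N with
  | zero =>
    obtain ⟨N, rfl⟩ : ∃ M, N = M + 1 := ⟨N - 1, by omega⟩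
    rw [sum_range_succ_pow_mul, digit, pow_zero, Nat.div_one, Nat.mul_add_mod,
      Nat.mod_eq_of_lt (ha 0)]
  | succ i ih =>
    obtain ⟨N, rfl⟩ : ∃ M, N = M + 1 := ⟨N - 1, by omega⟩
    rw [sum_range_succ_pow_mul, digit, pow_succ', ← Nat.div_div_eq_div_mul,
      Nat.mul_add_div (Nat.zero_lt_of_lt (ha 0)), Nat.div_eq_of_lt (ha 0), add_zero]
    exact ih (fun k => ha (k + 1)) (by omega)

end Digits

def gap (f : ℕ → ℕ) (j : ℕ) : ℕ := f j - f (j + 1)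

lemma eq_sum_Ico_gap {f : ℕ → ℕ} (hf : ∀ j, f (j + 1) ≤ f j) {N : ℕ}
    (hN : ∀ j, N ≤ j → f j = 0) (j : ℕ) : f j = ∑ k ∈ Ico j N, gap f k := by
  rcases le_or_gt N j with hj | hj
  · rw [hN j hj, Ico_eq_empty_of_le hj, sum_empty]
  suffices ∀ M, j ≤ M → f j = f M + ∑ k ∈ Ico j M, gap f k by
    simpa [hN N le_rfl] using this N hj.le
  intro M hM
  induction M, hM using Nat.le_induction with
  | base => simp
  | succ M hjM ih =>
    rw [sum_Ico_succ_top hjM, ih, gap]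
    have := hf M
    omega

lemma IsPartition.ext_of_gap {f g : ℕ → ℕ} (hf : IsPartition f) (hg : IsPartition g)
    (h : ∀ j, gap f j = gap g j) : f = g := by
  obtain ⟨hf, N, hN⟩ := hf
  obtain ⟨hg, M, hM⟩ := hg
  funext j
  rw [eq_sum_Ico_gap hf (fun j hj => hN j (le_of_max_le_left hj)) j,
    eq_sum_Ico_gap hg (fun j hj => hM j (le_of_max_le_right hj)) j]
  exact sum_congr rfl fun k _ => h k

lemma gap_sum_mul {ι : Type*} (s : Finset ι) (c : ι → ℕ) {g : ι → ℕ → ℕ} {j : ℕ}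
    (hg : ∀ i ∈ s, g i (j + 1) ≤ g i j) :
    gap (fun j => ∑ i ∈ s, c i * g i j) j = ∑ i ∈ s, c i * gap (g i) j := by
  simp only [gap, Nat.mul_sub]
  exact (sum_tsub_distrib s fun i hi => Nat.mul_le_mul_left _ (hg i hi)).symm

def ofGaps (N : ℕ) (g : ℕ → ℕ) (j : ℕ) : ℕ := ∑ k ∈ Ico j N, g k

lemma isPartition_ofGaps (N : ℕ) (g : ℕ → ℕ) : IsPartition (ofGaps N g) :=
  ⟨fun j => sum_le_sum_of_subset (Ico_subset_Ico (Nat.le_succ j) le_rfl),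
    N, fun j hj => by rw [ofGaps, Ico_eq_empty_of_le hj, sum_empty]⟩

lemma gap_ofGaps {N : ℕ} {g : ℕ → ℕ} (hg : ∀ k, N ≤ k → g k = 0) (j : ℕ) :
    gap (ofGaps N g) j = g j := by
  rcases lt_or_ge j N with hj | hj
  · rw [gap, ofGaps, ofGaps, sum_eq_sum_Ico_succ_bot hj, Nat.add_sub_cancel]
  · rw [gap, ofGaps, ofGaps, Ico_eq_empty_of_le hj, Ico_eq_empty_of_le (by omega), sum_empty,
      Nat.sub_self, hg j hj]

lemma finsum_eq_sum_range_of_eq_zero {M : Type*} [AddCommMonoid M] {g : ℕ → M} {N : ℕ}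
    (hg : ∀ i, N ≤ i → g i = 0) : ∑ᶠ i, g i = ∑ i ∈ range N, g i :=
  finsum_eq_sum_of_support_subset g fun i hi =>
    mem_coe.2 (mem_range.2 (by_contra fun h => hi (hg i (not_lt.1 h))))

def IsBaseExpansion (p : ℕ) (f : ℕ → ℕ) (d : ℕ → ℕ → ℕ) : Prop :=
  (∀ i, IsPartition (d i) ∧ Restricted p (d i)) ∧
    (∃ N, ∀ i, N ≤ i → d i = fun _ => 0) ∧
    (∀ j, f j = ∑ᶠ i, p ^ i * d i j)

namespace IsBaseExpansion

variable {p : ℕ} {f : ℕ → ℕ} {d d' : ℕ → ℕ → ℕ}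

lemma gap_eq_digit (hd : IsBaseExpansion p f d) (i j : ℕ) :
    gap (d i) j = digit p i (gap f j) := by
  obtain ⟨hpart, ⟨N, hN⟩, hsum⟩ := hd
  have hzero : ∀ l, max N (i + 1) ≤ l → d l = fun _ => 0 :=
    fun l hl => hN l (le_of_max_le_left hl)
  have hf : f = fun j => ∑ l ∈ range (max N (i + 1)), p ^ l * d l j := funext fun j => by
    rw [hsum j, finsum_eq_sum_range_of_eq_zero fun l hl => by simp [hzero l hl]]
  rw [hf, gap_sum_mul _ _ fun l _ => (hpart l).1.1 j]
  exact (digit_sum_range_pow_mul (fun l => (hpart l).2 j) (by omega)).symm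

lemma unique (hd : IsBaseExpansion p f d) (hd' : IsBaseExpansion p f d') : d = d' :=
  funext fun i => (hd.1 i).1.ext_of_gap (hd'.1 i).1 fun j => by
    rw [hd.gap_eq_digit, hd'.gap_eq_digit]

end IsBaseExpansion

lemma exists_isBaseExpansion {p : ℕ} (hp : 1 < p) {f : ℕ → ℕ} (hf : IsPartition f) :
    ∃ d, IsBaseExpansion p f d := by
  obtain ⟨hanti, N, hN⟩ := hf
  have hgap_lt (k : ℕ) : gap f k < p ^ f 0 :=
    (Nat.sub_le _ _).trans_lt
      ((antitone_nat_of_succ_le hanti (Nat.zero_le k)).trans_lt (Nat.lt_pow_self hp))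
  have hdigit_zero_high (i k : ℕ) (hi : f 0 ≤ i) : digit p i (gap f k) = 0 :=
    digit_eq_zero_of_lt_pow ((hgap_lt k).trans_le (Nat.pow_le_pow_right (by omega) hi))
  have hdigit_zero_tail (i k : ℕ) (hk : N ≤ k) : digit p i (gap f k) = 0 := by
    simp [gap, hN k hk, hN (k + 1) (by omega), digit]
  refine ⟨fun i => ofGaps N fun k => digit p i (gap f k),
    fun i => ⟨isPartition_ofGaps _ _, fun j => ?_⟩, ⟨f 0, fun i hi => ?_⟩, fun j => ?_⟩
  · change gap _ j < p
    rw [gap_ofGaps (hdigit_zero_tail i)]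
    exact digit_lt (by omega) i _
  · funext j
    exact sum_eq_zero fun k _ => hdigit_zero_high i k hi
  · rw [finsum_eq_sum_range_of_eq_zero (N := f 0) fun i hi => by
      simp [ofGaps, hdigit_zero_high i _ hi], eq_sum_Ico_gap hanti hN j]
    simp only [ofGaps, mul_sum]
    rw [sum_comm]
    exact sum_congr rfl fun k _ => (sum_range_pow_mul_digit (hgap_lt k)).symm

/-- every partition has a unique base-`p` expansion
`f = Σ_i p^i • (d i)` with each `d i` a `p`-restricted partition and
all but finitely many `d i` zero. -/
theorem exists_unique_base_p_expansion (p : ℕ) (hp : 2 ≤ p)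
    (f : ℕ → ℕ) (hf : IsPartition f) :
    ∃! d : ℕ → ℕ → ℕ,
      (∀ i, IsPartition (d i) ∧ Restricted p (d i)) ∧
      (∃ N, ∀ i, N ≤ i → d i = fun _ => 0) ∧
      (∀ j, f j = ∑ᶠ i, p ^ i * d i j) := by
  obtain ⟨d, hd⟩ := exists_isBaseExpansion hp hf
  exact ⟨d, hd, fun d' hd' => IsBaseExpansion.unique hd' hd⟩
end

section
/- Let l ≥ 2 and let λ = (λ_1, …, λ_n) be an l-core partition of length exactly n with smallest nonzero part λ_n = l - 1. Then λ equals the Steinberg partition σ_n = (n(l-1), (n-1)(l-1), …, 2(l-1), l-1). -/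
lemma conj_eq (f : ℕ → ℕ) (b m : ℕ) (h : ∀ i, b < f i ↔ i < m) : conj f b = m := by
  have hset : {i : ℕ | b < f i} = Set.Iio m := by
    ext i; simp [h i]
  calc conj f b = Nat.card (Set.Iio m : Set ℕ) := Nat.card_congr (Equiv.setCongr hset)
  _ = m := by
    rw [← Finset.coe_Iio, Nat.card_coe_set_eq, Set.ncard_coe_finset, Nat.card_Iio]

/-- an `l`-core of length exactly `n` with smallest nonzero part
`l - 1` is the Steinberg partition `σ_n`, whose parts are `(n-i+1)(l-1)`. -/
theorem core_with_last_part_l_sub_one_is_steinberg (l n : ℕ) (hl : 2 ≤ l) (hn : 1 ≤ n)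
    (f : ℕ → ℕ) (hf : IsPartition f) (hlen : ∀ i, f i ≠ 0 ↔ i < n)
    (hcore : IsCore l f) (hlast : f (n - 1) = l - 1) :
    ∀ i, f i = (n - i) * (l - 1) := by
  obtain ⟨hmono, -⟩ := hf
  have hanti : Antitone f := antitone_nat_of_succ_le hmono
  have hzero : ∀ i, n ≤ i → f i = 0 := by
    intro i hi
    by_contra h
    exact absurd ((hlen i).mp h) (by omega)
  have hge : ∀ a, a < n → l - 1 ≤ f a := by
    intro a ha
    calc l - 1 = f (n - 1) := hlast.symm
    _ ≤ f a := hanti (by omega)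
  -- conj for small columns
  have hconj_small : ∀ b, b < l - 1 → conj f b = n := by
    intro b hb
    refine conj_eq f b n (fun i => ⟨?_, ?_⟩)
    · intro h
      by_contra hi
      have := hzero i (by omega)
      omega
    · intro h
      have := hge i h
      omega
  -- the mod-l fact for the "beta numbers"
  have hmod : ∀ a, a < n → (f a + n - (a + 1)) % l = l - 1 := by
    intro a ha
    set M := f a + n - (a + 1) with hM
    have hMge : l - 1 ≤ M := by have := hge a ha; omega
    by_contra hr
    have hrlt : M % l < l - 1 := by
      have := Nat.mod_lt M (show 0 < l by omega)
      omega
    have hbf : M % l < f a := by have := hge a ha; omega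
    have hhook : hook f a (M % l) = M - M % l := by
      unfold hook
      rw [hconj_small _ hrlt]
      omega
    exact hcore a (M % l) hbf (hhook ▸ Nat.dvd_sub_mod M)
  -- successive differences are < l
  have hrestr : ∀ a, a + 1 < n → f a - f (a + 1) < l := by
    intro a ha
    by_contra h
    push_neg at h
    have hfa : l ≤ f a := by omega
    have hb1 : f (a + 1) ≤ f a - l := by omega
    have hconj : conj f (f a - l) = a + 1 := by
      refine conj_eq f (f a - l) (a + 1) (fun i => ⟨?_, ?_⟩)
      · intro hi
        by_contra hia
        have : f i ≤ f (a + 1) := hanti (by omega)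
        omega
      · intro hi
        have : f a ≤ f i := hanti (by omega)
        omega
    have hbf : f a - l < f a := by omega
    have hhook : hook f a (f a - l) = l := by
      unfold hook
      rw [hconj]
      omega
    exact hcore a (f a - l) hbf (by rw [hhook])
  -- the key step: successive differences equal l - 1
  have hstep : ∀ a, a + 1 < n → f a = f (a + 1) + (l - 1) := by
    intro a ha
    have h1 := hmod a (by omega)
    have h2 := hmod (a + 1) ha
    have hmle : f (a + 1) ≤ f a := hmono a
    set A := f a + n - (a + 1) with hA
    set B := f (a + 1) + n - (a + 2) with hB
    have hAB : B < A := by omega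
    have hdvd : l ∣ A - B := (Nat.modEq_iff_dvd' (le_of_lt hAB)).mp (h2.trans h1.symm)
    have hle : l ≤ A - B := Nat.le_of_dvd (by omega) hdvd
    have := hrestr a ha
    omega
  -- downward induction
  have hkey : ∀ k, k < n → f (n - 1 - k) = (k + 1) * (l - 1) := by
    intro k
    induction k with
    | zero => intro _; simpa using hlast
    | succ k ih =>
      intro hk
      have hik := ih (by omega)
      have heq : n - 1 - (k + 1) + 1 = n - 1 - k := by omega
      have := hstep (n - 1 - (k + 1)) (by omega)
      rw [heq, hik] at this
      rw [this]
      ring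
  intro i
  rcases lt_or_ge i n with hi | hi
  · have := hkey (n - 1 - i) (by omega)
    have heq : n - 1 - (n - 1 - i) = i := by omega
    rw [heq] at this
    rw [this]
    congr 1
    omega
  · rw [hzero i hi]
    have : n - i = 0 := by omega
    rw [this]
    ring
end

section
/- For n ≥ 1 and l ≥ 2, the Steinberg partition σ_n = ((l-1)n, (l-1)(n-1), …, (l-1)) is an l-core. -/
lemma conj_steinberg (l n b : ℕ) (hl : 2 ≤ l) :
    conj (fun i => (n - i) * (l - 1)) b = n - b / (l - 1) := by
  have hpos : 0 < l - 1 := by omega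
  have h : ∀ i : ℕ, (b < (n - i) * (l - 1)) ↔ i < n - b / (l - 1) := by
    intro i
    rw [← Nat.div_lt_iff_lt_mul hpos]
    generalize b / (l - 1) = K
    omega
  unfold conj
  rw [Nat.card_congr (Equiv.subtypeEquivRight h),
      Nat.card_congr (Fin.equivSubtype (n := n - b / (l-1))).symm, Nat.card_eq_fintype_card,
      Fintype.card_fin]

/-- the Steinberg partition `σ_n = ((l-1)n, (l-1)(n-1), …, (l-1))`
is an `l`-core. -/
theorem steinberg_is_core (l n : ℕ) (hl : 2 ≤ l) (hn : 1 ≤ n) :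
    IsCore l (fun i => (n - i) * (l - 1)) := by
  intro a b hb hdvd
  simp only at hb
  have hl1 : 0 < l - 1 := by omega
  have ha : a < n := by
    rcases Nat.lt_or_ge a n with h | h
    · exact h
    · rw [Nat.sub_eq_zero_of_le h] at hb; omega
  set q := b / (l - 1) with hq
  set r := b % (l - 1) with hr
  have hbr : q * (l - 1) + r = b := by exact Nat.div_add_mod' b (l - 1)
  have hrlt : r < l - 1 := Nat.mod_lt _ hl1
  have hqk : q < n - a := (Nat.div_lt_iff_lt_mul hl1).mpr hb
  set m := n - a - q with hm
  have hm1 : 1 ≤ m := by omega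
  have hookeq : hook (fun i => (n - i) * (l - 1)) a b + (r + 1) = m * l := by
    unfold hook
    rw [conj_steinberg l n b hl]
    have e1 : (n - a) * (l - 1) = q * (l - 1) + m * (l - 1) := by
      rw [← add_mul]; congr 1; omega
    have e2 : m * l = m * (l - 1) + m := by
      have : l = (l - 1) + 1 := by omega
      conv_lhs => rw [this]
      rw [Nat.mul_succ]
    have e3 : l - 1 ≤ m * (l - 1) := Nat.le_mul_of_pos_left _ hm1
    simp only
    rw [e1]
    generalize q * (l - 1) = P2 at *
    generalize m * (l - 1) = P3 at *
    generalize m * l = P4 at *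
    omega
  have hdvd2 : l ∣ r + 1 := by
    have : l ∣ m * l := dvd_mul_left l m
    have := (Nat.dvd_sub this hdvd)
    rwa [← hookeq, Nat.add_sub_cancel_left] at this
  have := Nat.le_of_dvd (by omega) hdvd2
  omega
end

section
/- Let λ = λ⁰ + l λ̄ with λ⁰ l-restricted. If λ⁰ is an l-core and, for some t ≥ 0, λ_{t+1} = λ_{t+2} = ⋯ = λ_{t+l} > 0, then λ⁰_{t+1} = ⋯ = λ⁰_{t+l} = 0 and λ̄_{t+1} = ⋯ = λ̄_{t+l} > 0; consequently the length of λ̄ exceeds the length of λ⁰ by at least l. -/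
lemma card_threshold {f : ℕ → ℕ} (ha : Antitone f) {b : ℕ} (hex : ∃ n, f n ≤ b) :
    Nat.card {i : ℕ // b < f i} = Nat.find hex := by
  have key : ∀ i, b < f i ↔ i < Nat.find hex := by
    intro i
    constructor
    · intro hi
      by_contra hle
      push_neg at hle
      have := le_trans (ha hle) (Nat.find_spec hex)
      omega
    · intro hi
      have := Nat.find_min hex hi
      omega
  have e : {i : ℕ // b < f i} ≃ Set.Iio (Nat.find hex) :=
    Equiv.subtypeEquivRight (fun i => by simpa using key i)
  rw [Nat.card_congr e]
  simp

/-- if `λ = λ⁰ + l·λ̄` with `λ⁰` an `l`-restricted `l`-core, and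
`λ_{t+1} = ⋯ = λ_{t+l} > 0`, then `λ⁰_{t+1} = ⋯ = λ⁰_{t+l} = 0` and
`λ̄_{t+1} = ⋯ = λ̄_{t+l} > 0`; consequently `len(λ̄) ≥ len(λ⁰) + l`. -/
theorem core_restricted_part_forces_flat_rows (l t : ℕ) (hl : 2 ≤ l)
    (f g h : ℕ → ℕ) (hf : IsPartition f) (hg : IsPartition g) (hh : IsPartition h)
    (hres : Restricted l g) (hdec : ∀ i, f i = g i + l * h i) (hcore : IsCore l g)
    (heq : ∀ k, k < l → f (t + k) = f t) (hpos : 0 < f t) :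
    (∀ k, k < l → g (t + k) = 0) ∧ (∀ k, k < l → h (t + k) = h t) ∧ 0 < h t ∧
      plen g + l ≤ plen h := by
  have ag : Antitone g := antitone_nat_of_succ_le hg.1
  have ah : Antitone h := antitone_nat_of_succ_le hh.1
  -- the block is constant for both g and h
  have hblock : ∀ k, k < l → g (t + k) = g t ∧ h (t + k) = h t := by
    intro k hk
    have h1 : g (t + k) ≤ g t := ag (Nat.le_add_right t k)
    have h2 : h (t + k) ≤ h t := ah (Nat.le_add_right t k)
    have h3 : l * h (t + k) ≤ l * h t := Nat.mul_le_mul_left l h2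
    have h4 := hdec (t + k)
    have h5 := hdec t
    have h6 := heq k hk
    have hgk : g (t + k) = g t := by omega
    have hmul : l * h (t + k) = l * h t := by omega
    exact ⟨hgk, Nat.eq_of_mul_eq_mul_left (by omega) hmul⟩
  -- g t = 0
  have hgt : g t = 0 := by
    by_contra hne
    have hgtpos : 0 < g t := Nat.pos_of_ne_zero hne
    obtain ⟨N, hN⟩ := hg.2
    have hex : ∃ n, g n ≤ g t - 1 := ⟨N, by have := hN N le_rfl; omega⟩
    set c := Nat.find hex with hc
    have hconj : conj g (g t - 1) = c := card_threshold ag hex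
    -- c ≥ t + l since g (t + (l-1)) = g t > g t - 1
    have hlast : g (t + (l - 1)) = g t := (hblock (l - 1) (by omega)).1
    have hclarge : t + l ≤ c := by
      by_contra hcl
      push_neg at hcl
      have hle : g (Nat.find hex) ≤ g t - 1 := Nat.find_spec hex
      have : g (t + (l - 1)) ≤ g (Nat.find hex) := ag (by omega)
      omega
    -- choose the row a = t + (c - t) % l
    set k := (c - t) % l with hk
    have hkl : k < l := Nat.mod_lt _ (by omega)
    have hga : g (t + k) = g t := (hblock k hkl).1
    have hbval : g t - 1 < g (t + k) := by omega
    have hdvd : l ∣ hook g (t + k) (g t - 1) := by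
      have hdm := Nat.div_add_mod (c - t) l
      have hookval : hook g (t + k) (g t - 1) = l * ((c - t) / l) := by
        unfold hook
        rw [hconj, hga]
        omega
      exact ⟨(c - t) / l, hookval⟩
    exact hcore (t + k) (g t - 1) hbval hdvd
  have hg0 : ∀ k, k < l → g (t + k) = 0 := fun k hk => by
    have := (hblock k hk).1; omega
  have hh0 : ∀ k, k < l → h (t + k) = h t := fun k hk => (hblock k hk).2
  have hht : 0 < h t := by
    have h5 := hdec t
    rcases Nat.eq_zero_or_pos (h t) with h0 | h0
    · rw [h0, Nat.mul_zero] at h5; omega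
    · exact h0
  refine ⟨hg0, hh0, hht, ?_⟩
  -- plen g ≤ t and plen h ≥ t + l
  obtain ⟨N, hN⟩ := hg.2
  obtain ⟨M, hM⟩ := hh.2
  have hexg : ∃ n, g n ≤ 0 := ⟨N, by have := hN N le_rfl; omega⟩
  have hexh : ∃ n, h n ≤ 0 := ⟨M, by have := hM M le_rfl; omega⟩
  have hpg : plen g = Nat.find hexg := by
    unfold plen
    rw [← card_threshold ag hexg]
    exact Nat.card_congr (Equiv.subtypeEquivRight (fun i => by omega))
  have hph : plen h = Nat.find hexh := by
    unfold plen
    rw [← card_threshold ah hexh]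
    exact Nat.card_congr (Equiv.subtypeEquivRight (fun i => by omega))
  have hg_le : Nat.find hexg ≤ t := Nat.find_le (by omega)
  have hh_ge : t + l ≤ Nat.find hexh := by
    by_contra hcl
    push_neg at hcl
    have hle : h (Nat.find hexh) ≤ 0 := Nat.find_spec hexh
    have h1 : h (t + (l - 1)) = h t := hh0 (l - 1) (by omega)
    have h2 : h (t + (l - 1)) ≤ h (Nat.find hexh) := ah (by omega)
    omega
  omega
end

section
/- An l-restricted partition λ with stind_l(λ) = len(λ) must equal the Steinberg partition σ_n where n = len(λ); and an l-restricted partition λ of length n with stind_l(λ) = n - 1 has the form σ_{n-1} + a·ω_n for some 0 ≤ a < l. -/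
lemma anti (f : ℕ → ℕ) (hf : IsPartition f) : ∀ i j, i ≤ j → f j ≤ f i := by
  intro i j h
  induction h with
  | refl => exact le_rfl
  | step h ih => exact le_trans (hf.1 _) ih

lemma stind_mem (l : ℕ) (hl : 2 ≤ l) (f : ℕ → ℕ) (hf : IsPartition f) :
    ∀ i < stind l f, f i - f (i + 1) = l - 1 := by
  have hne : ({m : ℕ | ∀ i < m, f i - f (i + 1) = l - 1}).Nonempty := ⟨0, by simp⟩
  obtain ⟨N, hN⟩ := hf.2
  have hbdd : BddAbove {m : ℕ | ∀ i < m, f i - f (i + 1) = l - 1} := by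
    refine ⟨N, fun m hm => ?_⟩
    by_contra h
    push_neg at h
    have := hm N h
    have h1 : f N = 0 := hN N le_rfl
    have h2 : f (N + 1) = 0 := hN (N + 1) (by omega)
    omega
  exact Nat.sSup_mem hne hbdd

lemma plen_eq (f : ℕ → ℕ) (hf : IsPartition f) :
    ∃ K, plen f = K ∧ f K = 0 ∧ ∀ i < K, f i ≠ 0 := by
  obtain ⟨N, hN⟩ := hf.2
  have hex : ∃ i, f i = 0 := ⟨N, hN N le_rfl⟩
  set K := Nat.find hex with hK
  refine ⟨K, ?_, Nat.find_spec hex, fun i hi => Nat.find_min hex hi⟩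
  have hset : {i : ℕ | f i ≠ 0} = Set.Iio K := by
    ext i
    simp only [Set.mem_setOf_eq, Set.mem_Iio]
    constructor
    · intro h
      by_contra hle
      push_neg at hle
      exact h (le_antisymm (le_trans (anti f hf K i hle) (Nat.find_spec hex).le) (Nat.zero_le _))
    · exact fun h => Nat.find_min hex h
  unfold plen
  rw [show {i : ℕ // f i ≠ 0} = ↥{i : ℕ | f i ≠ 0} from rfl, hset]
  simp

lemma back (l : ℕ) (hl : 2 ≤ l) (f : ℕ → ℕ) (hf : IsPartition f) (K : ℕ)
    (hd : ∀ i < K, f i - f (i + 1) = l - 1) :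
    ∀ d ≤ K, f (K - d) = d * (l - 1) + f K := by
  intro d
  induction d with
  | zero => simp
  | succ d ih =>
    intro hdK
    have hiK : K - (d + 1) < K := by omega
    have h1 := hd _ hiK
    have h2 := hf.1 (K - (d + 1))
    have h3 : K - (d + 1) + 1 = K - d := by omega
    have h4 := ih (by omega)
    have h5 : (d + 1) * (l - 1) = d * (l - 1) + (l - 1) := by ring
    rw [h3] at h1 h2
    omega

/-- an `l`-restricted partition whose Steinberg index equals its length is
the Steinberg partition `σ_n` (`n` its length); and an `l`-restricted partition of length
`n` with Steinberg index `n - 1` has the form `σ_{n-1} + a·ω_n` for some `0 ≤ a < l`. -/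
theorem restricted_with_large_steinberg_index (l : ℕ) (hl : 2 ≤ l)
    (f : ℕ → ℕ) (hf : IsPartition f) (hres : Restricted l f) :
    (stind l f = plen f → ∀ i, f i = (plen f - i) * (l - 1)) ∧
    (∀ n, 1 ≤ n → (∀ i, f i ≠ 0 ↔ i < n) → stind l f = n - 1 →
      ∃ a, a < l ∧ ∀ i, f i = (n - 1 - i) * (l - 1) + if i < n then a else 0) := by
  obtain ⟨K, hKp, hK0, hKne⟩ := plen_eq f hf
  have hzero : ∀ i, K ≤ i → f i = 0 := fun i hi =>
    Nat.le_antisymm (le_trans (anti f hf K i hi) hK0.le) (Nat.zero_le _)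
  constructor
  · intro hst i
    rw [hKp] at hst ⊢
    have hd : ∀ i < K, f i - f (i + 1) = l - 1 := by
      rw [← hst]; exact stind_mem l hl f hf
    rcases le_or_gt K i with h | h
    · rw [hzero i h, show K - i = 0 by omega]; simp
    · have := back l hl f hf K hd (K - i) (by omega)
      rw [show K - (K - i) = i by omega, hK0] at this
      omega
  · intro n hn hne hst
    have hfn : f n = 0 := by
      by_contra h
      exact lt_irrefl n ((hne n).mp h)
    have hd : ∀ i < n - 1, f i - f (i + 1) = l - 1 := by
      rw [← hst]; exact stind_mem l hl f hf
    have hn1 : n - 1 + 1 = n := by omega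
    have ha : f (n - 1) < l := by
      have h1 := hres (n - 1)
      rw [hn1, hfn] at h1
      omega
    refine ⟨f (n - 1), ha, fun i => ?_⟩
    rcases lt_or_ge i n with h | h
    · have hb := back l hl f hf (n - 1) hd (n - 1 - i) (by omega)
      rw [show n - 1 - (n - 1 - i) = i by omega] at hb
      rw [if_pos h]
      exact hb
    · have h0 : f i = 0 :=
        Nat.le_antisymm (le_trans (anti f hf n i h) hfn.le) (Nat.zero_le _)
      rw [if_neg (by omega), h0, show n - 1 - i = 0 by omega]
      simp
end
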